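/- Let (X,d) be a complete separable metric space and m a nonnegative Borel measure on X, finite on bounded sets. Let f ∈ L²(X,m), g ∈ L²(X,m), and suppose there is a sequence f_n ∈ Lip_bs(X) with f_n → f in L²(X,m) and lip(f_n) → g weakly in L²(X,m). Then f² ∈ BV(X,d,m) and |D(f²)|(X) ≤ 2 ∫_X |f| g dm. -/

import Mathlib

open MeasureTheory Filter Topology ENNReal

/-- The slope (pointwise Lipschitz constant) of `f` at `x`, with the convention that it is `0`
at isolated points. -/
noncomputable def lipSlope {X : Type*} [MetricSpace X] (f : X → ℝ) (x : X) : ℝ :=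
  Filter.limsup (fun y => |f y - f x| / dist y x) (𝓝[≠] x)

/-- Lipschitz functions with bounded support. -/
def LipBS {X : Type*} [MetricSpace X] (f : X → ℝ) : Prop :=
  (∃ K : NNReal, LipschitzWith K f) ∧ Bornology.IsBounded (Function.support f)

/-- Functions which are Lipschitz on bounded sets. -/
def LipLoc {X : Type*} [MetricSpace X] (f : X → ℝ) : Prop :=
  ∀ s : Set X, Bornology.IsBounded s → ∃ K : NNReal, LipschitzOnWith K f s

/-- `u ∈ BV(X,d,m)`. -/
def MemBV {X : Type*} [MetricSpace X] [MeasurableSpace X]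
    (m : Measure X) (u : X → ℝ) : Prop :=
  Integrable u m ∧ ∃ g : ℕ → X → ℝ, (∀ n, LipLoc (g n)) ∧
    Tendsto (fun n => ∫⁻ x, ENNReal.ofReal |g n x - u x| ∂m) atTop (𝓝 0) ∧
    Filter.limsup (fun n => ∫⁻ x, ENNReal.ofReal (lipSlope (g n) x) ∂m) atTop < ⊤

/-- The total variation `|Du|(X)` of a function `u`. -/
noncomputable def totalVar {X : Type*} [MetricSpace X] [MeasurableSpace X]
    (m : Measure X) (u : X → ℝ) : ℝ≥0∞ :=
  sInf { p : ℝ≥0∞ | ∃ g : ℕ → X → ℝ, (∀ n, LipLoc (g n)) ∧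
    Tendsto (fun n => ∫⁻ x, ENNReal.ofReal |g n x - u x| ∂m) atTop (𝓝 0) ∧
    p = Filter.liminf (fun n => ∫⁻ x, ENNReal.ofReal (lipSlope (g n) x) ∂m) atTop }

/-!
Pointwise `lip (f_n²) ≤ 2 |f_n| lip f_n`, since `f_n(y)² - f_n(x)²` factors as
`(f_n(y) + f_n(x)) (f_n(y) - f_n(x))`; the `f_n²` are locally Lipschitz and converge to `f²` in
`L¹` by Cauchy–Schwarz, so `|D(f²)|(X) ≤ liminf 2 ∫ |f_n| lip f_n`. A weakly convergent sequence
in `L²` is bounded (Banach–Steinhaus), hence its pairing with the strongly convergent sequence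
`|f_n| → |f|` converges, to `∫ |f| g`. For these integrals to make sense, `lip f_n` must be Borel:
for a Lipschitz `f`, `lip f` is the infimum over `k` of the suprema of the difference quotients
over `0 < d(y, x) < 1/(k+1)`, and each such supremum is lower semicontinuous in `x`.
-/

lemma IsOpen.lowerSemicontinuous_indicator_of_continuousOn {α : Type*} [TopologicalSpace α]
    {s : Set α} {φ : α → ℝ} (hs : IsOpen s) (hφ : ContinuousOn φ s) (hφ0 : ∀ x ∈ s, 0 ≤ φ x) :
    LowerSemicontinuous (s.indicator φ) := by
  intro x a ha
  by_cases hx : x ∈ s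
  · rw [Set.indicator_of_mem hx] at ha
    filter_upwards [hs.mem_nhds hx, (hφ.continuousAt (hs.mem_nhds hx)).eventually_const_lt ha]
      with y hys hy
    rwa [Set.indicator_of_mem hys]
  · rw [Set.indicator_of_notMem hx] at ha
    exact .of_forall fun y => ha.trans_le (Set.indicator_nonneg hφ0 y)

section Slope

variable {X : Type*} [MetricSpace X] {f : X → ℝ} {x : X} {K : NNReal}

lemma lipSlope_eq_zero_of_nhdsNE_eq_bot (h : 𝓝[≠] x = ⊥) : lipSlope f x = 0 := by
  simp [lipSlope, h, limsup_eq]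

lemma lipSlope_nonneg (f : X → ℝ) (x : X) : 0 ≤ lipSlope f x := by
  rcases (𝓝[≠] x).eq_or_neBot with h | h
  · exact (lipSlope_eq_zero_of_nhdsNE_eq_bot h).ge
  · refine Real.sInf_nonneg fun a ha => ?_
    obtain ⟨y, hy⟩ := (show ∀ᶠ y in 𝓝[≠] x, |f y - f x| / dist y x ≤ a from ha).exists
    exact (div_nonneg (abs_nonneg _) dist_nonneg).trans hy

lemma lipSlope_le_of_eventually_le {c : ℝ} (hc : 0 ≤ c)
    (h : ∀ᶠ y in 𝓝[≠] x, |f y - f x| / dist y x ≤ c) : lipSlope f x ≤ c := by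
  rcases (𝓝[≠] x).eq_or_neBot with hx | hx
  · exact (lipSlope_eq_zero_of_nhdsNE_eq_bot hx).trans_le hc
  · exact limsup_le_of_le
      (isCoboundedUnder_le_of_le _ fun y => div_nonneg (abs_nonneg _) dist_nonneg) h

lemma LipschitzWith.abs_sub_div_dist_le (hf : LipschitzWith K f) (y x : X) :
    |f y - f x| / dist y x ≤ K :=
  div_le_of_le_mul₀ dist_nonneg K.coe_nonneg (by simpa [Real.dist_eq] using hf.dist_le_mul y x)

lemma LipschitzWith.isBoundedUnder_abs_sub_div_dist (hf : LipschitzWith K f) (x : X) :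
    IsBoundedUnder (· ≤ ·) (𝓝[≠] x) fun y => |f y - f x| / dist y x :=
  isBoundedUnder_of_eventually_le (.of_forall fun y => hf.abs_sub_div_dist_le y x)

lemma LipschitzWith.lipSlope_le (hf : LipschitzWith K f) (x : X) : lipSlope f x ≤ K :=
  lipSlope_le_of_eventually_le K.coe_nonneg (.of_forall fun y => hf.abs_sub_div_dist_le y x)

lemma support_lipSlope_subset (f : X → ℝ) :
    Function.support (lipSlope f) ⊆ closure (Function.support f) := by
  intro x hx
  by_contra hxs
  have hzero : ∀ y ∉ closure (Function.support f), f y = 0 := fun y hy =>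
    Function.notMem_support.mp fun h => hy (subset_closure h)
  refine hx (le_antisymm (lipSlope_le_of_eventually_le le_rfl ?_) (lipSlope_nonneg f x))
  filter_upwards [nhdsWithin_le_nhds (isClosed_closure.isOpen_compl.mem_nhds hxs)] with y hy
  simp [hzero y hy, hzero x hxs]

lemma LipschitzWith.lipSlope_sq_le (hf : LipschitzWith K f) (x : X) :
    lipSlope (fun y => f y ^ 2) x ≤ 2 * |f x| * lipSlope f x := by
  rcases (𝓝[≠] x).eq_or_neBot with hx | hx
  · simp [lipSlope_eq_zero_of_nhdsNE_eq_bot hx]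
  have hfactor : (fun y => |f y ^ 2 - f x ^ 2| / dist y x) =
      (fun y => |f y + f x|) * fun y => |f y - f x| / dist y x := by
    ext y
    rw [Pi.mul_apply, ← mul_div_assoc, ← abs_mul, ← sq_sub_sq]
  have hsum : Tendsto (fun y => |f y + f x|) (𝓝[≠] x) (𝓝 (2 * |f x|)) := by
    have : Tendsto (fun y => |f y + f x|) (𝓝[≠] x) (𝓝 |f x + f x|) :=
      ((hf.continuous.tendsto x).mono_left nhdsWithin_le_nhds).add_const (f x) |>.abs
    rwa [← two_mul, abs_mul, abs_two] at this
  calc lipSlope (fun y => f y ^ 2) x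
      = limsup ((fun y => |f y + f x|) * fun y => |f y - f x| / dist y x) (𝓝[≠] x) := by
        rw [← hfactor]; rfl
    _ ≤ limsup (fun y => |f y + f x|) (𝓝[≠] x) * lipSlope f x :=
        limsup_mul_le (.of_forall fun _ => abs_nonneg _) hsum.isBoundedUnder_le
          (.of_forall fun _ => div_nonneg (abs_nonneg _) dist_nonneg)
          (hf.isBoundedUnder_abs_sub_div_dist x)
    _ = 2 * |f x| * lipSlope f x := by rw [hsum.limsup_eq]

end Slope

lemma LipLoc.sq {X : Type*} [MetricSpace X] {f : X → ℝ} (hf : LipLoc f) :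
    LipLoc fun x => f x ^ 2 := by
  intro s hs
  obtain ⟨K, hK⟩ := hf s hs
  obtain ⟨g, hg, hfg⟩ := hK.extend_real
  obtain ⟨C, hC⟩ := isBounded_iff_forall_norm_le.1 (hg.isBounded_image hs)
  have hfC : ∀ x ∈ s, |f x| ≤ C := fun x hx => hfg hx ▸ hC _ ⟨x, hx, rfl⟩
  refine ⟨_, LipschitzOnWith.of_dist_le' (K := 2 * C * K) fun x hx y hy => ?_⟩
  calc dist (f x ^ 2) (f y ^ 2) = |f x + f y| * dist (f x) (f y) := by
        rw [Real.dist_eq, Real.dist_eq, sq_sub_sq, abs_mul]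
    _ ≤ (2 * C) * (K * dist x y) := by
        refine mul_le_mul ?_ (hK.dist_le_mul x hx y hy) dist_nonneg
          (by linarith [hfC x hx, abs_nonneg (f x)])
        linarith [abs_add_le (f x) (f y), hfC x hx, hfC y hy]
    _ = 2 * C * K * dist x y := by ring

lemma LipBS.lipLoc {X : Type*} [MetricSpace X] {f : X → ℝ} (hf : LipBS f) : LipLoc f :=
  fun _ _ => hf.1.imp fun _ hK => hK.lipschitzOnWith

section Measurability

variable {X : Type*} [MetricSpace X] {f : X → ℝ} {K : NNReal}

/-- Written as a supremum over `y` of functions of `x`, so that lower semicontinuity in `x` can be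
checked term by term. -/
noncomputable def slopeSupBall (f : X → ℝ) (r : ℝ) (x : X) : ℝ :=
  ⨆ y : X, (Metric.ball y r \ {y}).indicator (fun z => |f y - f z| / dist y z) x

lemma LipschitzWith.bddAbove_slopeSupBall (hf : LipschitzWith K f) (r : ℝ) (x : X) :
    BddAbove (Set.range fun y =>
      (Metric.ball y r \ {y}).indicator (fun z => |f y - f z| / dist y z) x) := by
  refine ⟨K, Set.forall_mem_range.2 fun y => ?_⟩
  by_cases hx : x ∈ Metric.ball y r \ {y}
  · rw [Set.indicator_of_mem hx]; exact hf.abs_sub_div_dist_le y x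
  · rw [Set.indicator_of_notMem hx]; exact K.coe_nonneg

lemma LipschitzWith.lowerSemicontinuous_slopeSupBall (hf : LipschitzWith K f) (r : ℝ) :
    LowerSemicontinuous (slopeSupBall f r) := by
  refine lowerSemicontinuous_ciSup (hf.bddAbove_slopeSupBall r) fun y => ?_
  refine (Metric.isOpen_ball.sdiff isClosed_singleton).lowerSemicontinuous_indicator_of_continuousOn
    (fun z hz => ?_) fun z _ => div_nonneg (abs_nonneg _) dist_nonneg
  refine ((continuous_const.sub hf.continuous).abs.continuousAt.div
    (continuous_const.dist continuous_id).continuousAt ?_).continuousWithinAt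
  exact dist_ne_zero.2 (Ne.symm hz.2)

lemma LipschitzWith.lipSlope_eq_iInf_slopeSupBall (hf : LipschitzWith K f) (x : X) :
    lipSlope f x = ⨅ k : ℕ, slopeSupBall f ((k : ℝ) + 1)⁻¹ x := by
  have : Nonempty X := ⟨x⟩
  have hsup_nonneg : ∀ r, 0 ≤ slopeSupBall f r x := fun r =>
    Real.iSup_nonneg fun y =>
      Set.indicator_nonneg (fun z _ => div_nonneg (abs_nonneg _) dist_nonneg) x
  refine le_antisymm (le_ciInf fun k => lipSlope_le_of_eventually_le (hsup_nonneg _) ?_) ?_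
  · filter_upwards [self_mem_nhdsWithin,
      nhdsWithin_le_nhds (Metric.ball_mem_nhds x (Nat.inv_pos_of_nat (n := k)))] with y hyx hy
    refine le_trans ?_ (le_ciSup (hf.bddAbove_slopeSupBall _ x) y)
    rw [Set.indicator_of_mem (show x ∈ Metric.ball y ((k : ℝ) + 1)⁻¹ \ {y} from
      ⟨Metric.mem_ball_comm.1 hy, Ne.symm hyx⟩)]
  · refine le_of_forall_gt_imp_ge_of_dense fun a ha => ?_
    obtain ⟨r, hr, hq⟩ := Metric.eventually_nhds_iff.1 (eventually_nhdsWithin_iff.1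
      (eventually_lt_of_limsup_lt ha (hf.isBoundedUnder_abs_sub_div_dist x)))
    obtain ⟨k, hk⟩ := exists_nat_one_div_lt hr
    refine (ciInf_le ⟨0, Set.forall_mem_range.2 fun k => hsup_nonneg _⟩ k).trans
      (ciSup_le fun y => ?_)
    by_cases hy : x ∈ Metric.ball y ((k : ℝ) + 1)⁻¹ \ {y}
    · rw [Set.indicator_of_mem hy]
      refine (hq ?_ (Ne.symm hy.2)).le
      exact (Metric.mem_ball'.1 hy.1).trans (one_div ((k : ℝ) + 1) ▸ hk)
    · rw [Set.indicator_of_notMem hy]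
      exact (lipSlope_nonneg f x).trans ha.le

lemma LipschitzWith.measurable_lipSlope [MeasurableSpace X] [OpensMeasurableSpace X]
    (hf : LipschitzWith K f) : Measurable (lipSlope f) := by
  simp_rw [funext hf.lipSlope_eq_iInf_slopeSupBall]
  exact .iInf fun k => (hf.lowerSemicontinuous_slopeSupBall _).measurable

end Measurability

lemma tendsto_inner_of_forall_tendsto_inner {𝕜 E : Type*} [RCLike 𝕜] [NormedAddCommGroup E]
    [InnerProductSpace 𝕜 E] [CompleteSpace E] {u v : ℕ → E} {w : E} {L : E → 𝕜}
    (hu : ∀ ψ, Tendsto (fun n => inner 𝕜 (u n) ψ) atTop (𝓝 (L ψ)))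
    (hv : Tendsto v atTop (𝓝 w)) :
    Tendsto (fun n => inner 𝕜 (u n) (v n)) atTop (𝓝 (L w)) := by
  obtain ⟨C, hC⟩ : ∃ C, ∀ n, ‖innerSL 𝕜 (u n)‖ ≤ C := banach_steinhaus fun ψ => by
    obtain ⟨C, hC⟩ := (hu ψ).norm.bddAbove_range
    exact ⟨C, fun n => hC ⟨n, rfl⟩⟩
  have hsmall : Tendsto (fun n => inner 𝕜 (u n) (v n - w)) atTop (𝓝 0) := by
    refine squeeze_zero_norm (fun n => (norm_inner_le_norm _ _).trans ?_)
      (by simpa using (tendsto_sub_nhds_zero_iff.2 hv).norm.const_mul C)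
    exact mul_le_mul_of_nonneg_right ((innerSL_apply_norm 𝕜 (u n)).symm.trans_le (hC n))
      (norm_nonneg _)
  simpa [inner_sub_right] using (hu w).add hsmall

section L2

variable {α : Type*} [MeasurableSpace α] {m : Measure α}

lemma MemLp.inner_toLp_eq_integral_mul {u φ : α → ℝ} (hu : MemLp u 2 m) (hφ : MemLp φ 2 m) :
    inner ℝ (hu.toLp u) (hφ.toLp φ) = ∫ x, u x * φ x ∂m := by
  rw [L2.inner_def]
  refine integral_congr_ae ?_
  filter_upwards [hu.coeFn_toLp, hφ.coeFn_toLp] with x hux hφx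
  rw [hux, hφx, Real.inner_apply]

lemma tendsto_integral_mul_of_weak_of_tendsto_eLpNorm {l : ℕ → α → ℝ} {g : α → ℝ}
    (hl : ∀ n, MemLp (l n) 2 m)
    (hweak : ∀ φ : α → ℝ, MemLp φ 2 m →
      Tendsto (fun n => ∫ x, l n x * φ x ∂m) atTop (𝓝 (∫ x, g x * φ x ∂m)))
    {h : ℕ → α → ℝ} {h₀ : α → ℝ} (hh : ∀ n, MemLp (h n) 2 m) (hh₀ : MemLp h₀ 2 m)
    (hlim : Tendsto (fun n => eLpNorm (h n - h₀) 2 m) atTop (𝓝 0)) :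
    Tendsto (fun n => ∫ x, l n x * h n x ∂m) atTop (𝓝 (∫ x, g x * h₀ x ∂m)) := by
  have hinner : ∀ n (ψ : Lp ℝ 2 m), inner ℝ ((hl n).toLp (l n)) ψ = ∫ x, l n x * ψ x ∂m :=
    fun n ψ => by
      conv_lhs => rw [← Lp.toLp_coeFn ψ (Lp.memLp ψ)]
      exact MemLp.inner_toLp_eq_integral_mul (hl n) (Lp.memLp ψ)
  have hconv := tendsto_inner_of_forall_tendsto_inner (u := fun n => (hl n).toLp (l n))
    (L := fun ψ : Lp ℝ 2 m => ∫ x, g x * ψ x ∂m)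
    (fun ψ => by simpa only [hinner] using hweak ψ (Lp.memLp ψ))
    ((Lp.tendsto_Lp_iff_tendsto_eLpNorm'' h hh h₀ hh₀).2 hlim)
  have hlimit : ∫ x, g x * hh₀.toLp h₀ x ∂m = ∫ x, g x * h₀ x ∂m :=
    integral_congr_ae (hh₀.coeFn_toLp.mono fun x hx => congrArg (g x * ·) hx)
  simpa only [MemLp.inner_toLp_eq_integral_mul, hlimit] using hconv

lemma eLpNorm_two_sq_eq_lintegral (v : α → ℝ) :
    eLpNorm v 2 m ^ 2 = ∫⁻ x, ENNReal.ofReal (|v x| ^ 2) ∂m := by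
  have := eLpNorm_nnreal_pow_eq_lintegral (f := v) (μ := m) (p := 2) two_ne_zero
  simp only [NNReal.coe_ofNat, ENNReal.coe_ofNat, ENNReal.rpow_ofNat] at this
  rw [this]
  congr! 2 with x
  rw [Real.enorm_eq_ofReal_abs, ENNReal.ofReal_pow (abs_nonneg _)]

lemma tendsto_eLpNorm_two_of_tendsto_lintegral_sq {ι : Type*} {l : Filter ι} {v : ι → α → ℝ}
    (h : Tendsto (fun i => ∫⁻ x, ENNReal.ofReal (|v i x| ^ 2) ∂m) l (𝓝 0)) :
    Tendsto (fun i => eLpNorm (v i) 2 m) l (𝓝 0) := by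
  simp_rw [← eLpNorm_two_sq_eq_lintegral, ← ENNReal.rpow_two] at h
  have := ((ENNReal.continuous_rpow_const (y := (2 : ℝ)⁻¹)).tendsto 0).comp h
  simpa only [Function.comp_def, ENNReal.rpow_rpow_inv two_ne_zero,
    ENNReal.zero_rpow_of_pos (inv_pos.2 two_pos)] using this

lemma tendsto_lintegral_abs_sq_sub_sq {ι : Type*} {l : Filter ι} {u : ι → α → ℝ} {u₀ : α → ℝ}
    (hu : ∀ i, AEStronglyMeasurable (u i) m) (hu₀ : MemLp u₀ 2 m)
    (h : Tendsto (fun i => eLpNorm (u i - u₀) 2 m) l (𝓝 0)) :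
    Tendsto (fun i => ∫⁻ x, ENNReal.ofReal |u i x ^ 2 - u₀ x ^ 2| ∂m) l (𝓝 0) := by
  set c := eLpNorm (fun x => 2 * u₀ x) 2 m
  have hc : c ≠ ⊤ := (hu₀.const_mul 2).eLpNorm_ne_top
  have hbound : ∀ i, ∫⁻ x, ENNReal.ofReal |u i x ^ 2 - u₀ x ^ 2| ∂m ≤
      eLpNorm (u i - u₀) 2 m * (eLpNorm (u i - u₀) 2 m + c) := fun i => by
    have hfactor : (fun x => u i x ^ 2 - u₀ x ^ 2) =
        (u i - u₀) • ((u i - u₀) + fun x => 2 * u₀ x) := by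
      ext x; simp only [smul_eq_mul, Pi.mul_apply, Pi.sub_apply, Pi.add_apply]; ring
    have hdiff : AEStronglyMeasurable (u i - u₀) m := (hu i).sub hu₀.aestronglyMeasurable
    calc ∫⁻ x, ENNReal.ofReal |u i x ^ 2 - u₀ x ^ 2| ∂m
        = eLpNorm (fun x => u i x ^ 2 - u₀ x ^ 2) 1 m := by
          simp [eLpNorm_one_eq_lintegral_enorm, Real.enorm_eq_ofReal_abs]
      _ ≤ eLpNorm (u i - u₀) 2 m * eLpNorm ((u i - u₀) + fun x => 2 * u₀ x) 2 m := by
          rw [hfactor]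
          exact eLpNorm_smul_le_mul_eLpNorm
            (hdiff.add (hu₀.const_mul 2).aestronglyMeasurable) hdiff
      _ ≤ eLpNorm (u i - u₀) 2 m * (eLpNorm (u i - u₀) 2 m + c) := by
          gcongr
          exact eLpNorm_add_le hdiff (hu₀.const_mul 2).aestronglyMeasurable one_le_two
  have hlim : Tendsto (fun i => eLpNorm (u i - u₀) 2 m * (eLpNorm (u i - u₀) 2 m + c)) l
      (𝓝 0) := by
    simpa using ENNReal.Tendsto.mul h (Or.inr (by simpa using hc)) (h.add_const c)
      (Or.inr ENNReal.zero_ne_top)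
  exact tendsto_of_tendsto_of_tendsto_of_le_of_le tendsto_const_nhds hlim (fun _ => zero_le)
    hbound

end L2

section Integrals

variable {X : Type*} [MetricSpace X] [MeasurableSpace X] {m : Measure X}

lemma memLp_of_abs_le_of_isBounded_support (hbdd : ∀ s : Set X, Bornology.IsBounded s → m s < ⊤)
    {u : X → ℝ} (hu : AEStronglyMeasurable u m) {C : ℝ} (hC : ∀ x, |u x| ≤ C)
    (hsupp : Bornology.IsBounded (Function.support u)) (p : ℝ≥0∞) : MemLp u p m :=
  (memLp_top_of_bound hu C (.of_forall hC)).mono_exponent_of_measure_support_ne_top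
    (fun _ => Function.notMem_support.mp) (hbdd _ hsupp).ne le_top

lemma LipschitzWith.lintegral_lipSlope_sq_le {f : X → ℝ} {K : NNReal} (hf : LipschitzWith K f)
    (hint : Integrable (fun x => lipSlope f x * |f x|) m) :
    ∫⁻ x, ENNReal.ofReal (lipSlope (fun y => f y ^ 2) x) ∂m ≤
      ENNReal.ofReal (2 * ∫ x, lipSlope f x * |f x| ∂m) :=
  calc ∫⁻ x, ENNReal.ofReal (lipSlope (fun y => f y ^ 2) x) ∂m
      ≤ ∫⁻ x, ENNReal.ofReal (2 * (lipSlope f x * |f x|)) ∂m :=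
        lintegral_mono fun x =>
          ENNReal.ofReal_le_ofReal ((hf.lipSlope_sq_le x).trans_eq (by ring))
    _ = ENNReal.ofReal (2 * ∫ x, lipSlope f x * |f x| ∂m) := by
        rw [← integral_const_mul, ofReal_integral_eq_lintegral_ofReal (hint.const_mul 2)
          (.of_forall fun x => by positivity [lipSlope_nonneg f x])]

lemma memBV_and_totalVar_le_of_tendsto {u : X → ℝ} (hu : Integrable u m) {v : ℕ → X → ℝ}
    (hv : ∀ n, LipLoc (v n))
    (hvu : Tendsto (fun n => ∫⁻ x, ENNReal.ofReal |v n x - u x| ∂m) atTop (𝓝 0))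
    {a : ℕ → ℝ≥0∞} {A : ℝ≥0∞} (hA : A ≠ ⊤) (ha : Tendsto a atTop (𝓝 A))
    (hle : ∀ n, ∫⁻ x, ENNReal.ofReal (lipSlope (v n) x) ∂m ≤ a n) :
    MemBV m u ∧ totalVar m u ≤ A :=
  ⟨⟨hu, v, hv, hvu, (limsup_le_limsup (.of_forall hle)).trans_lt (ha.limsup_eq ▸ hA.lt_top)⟩,
    (sInf_le ⟨v, hv, hvu, rfl⟩ : totalVar m u ≤ _).trans
      ((liminf_le_liminf (.of_forall hle)).trans ha.liminf_eq.le)⟩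

variable [OpensMeasurableSpace X] {f : X → ℝ}

lemma LipBS.memLp (hf : LipBS f) (hbdd : ∀ s : Set X, Bornology.IsBounded s → m s < ⊤)
    (p : ℝ≥0∞) : MemLp f p m := by
  obtain ⟨⟨K, hK⟩, hsupp⟩ := hf
  obtain ⟨C, hC⟩ := isBounded_iff_forall_norm_le.1 (hK.isBounded_image hsupp)
  refine memLp_of_abs_le_of_isBounded_support hbdd hK.continuous.aestronglyMeasurable
    (C := max C 0) (fun x => ?_) hsupp p
  by_cases hx : f x = 0
  · simp [hx]
  · exact (hC _ ⟨x, hx, rfl⟩).trans (le_max_left _ _)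

lemma LipBS.memLp_lipSlope (hf : LipBS f) (hbdd : ∀ s : Set X, Bornology.IsBounded s → m s < ⊤)
    (p : ℝ≥0∞) : MemLp (lipSlope f) p m := by
  obtain ⟨⟨K, hK⟩, hsupp⟩ := hf
  refine memLp_of_abs_le_of_isBounded_support hbdd hK.measurable_lipSlope.aestronglyMeasurable
    (C := K) (fun x => ?_) (hsupp.closure.subset (support_lipSlope_subset f)) p
  rw [abs_of_nonneg (lipSlope_nonneg f x)]
  exact hK.lipSlope_le x

end Integrals

theorem sq_memBV_of_weak_gradient_general {X : Type*} [MetricSpace X]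
    [MeasurableSpace X] [BorelSpace X]
    (m : Measure X)
    (hbdd : ∀ s : Set X, Bornology.IsBounded s → m s < ⊤)
    (f g : X → ℝ) (hf : MemLp f 2 m)
    (fn : ℕ → X → ℝ) (hfn : ∀ n, LipBS (fn n))
    (hL2 : Tendsto (fun n => ∫⁻ x, ENNReal.ofReal (|fn n x - f x| ^ 2) ∂m) atTop (𝓝 0))
    (hweak : ∀ φ : X → ℝ, MemLp φ 2 m →
      Tendsto (fun n => ∫ x, lipSlope (fn n) x * φ x ∂m) atTop
        (𝓝 (∫ x, g x * φ x ∂m))) :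
    MemBV m (fun x => (f x) ^ 2) ∧
      totalVar m (fun x => (f x) ^ 2) ≤ ENNReal.ofReal (2 * ∫ x, |f x| * g x ∂m) := by
  have hfn2 : ∀ n, MemLp (fn n) 2 m := fun n => (hfn n).memLp hbdd 2
  have hslope2 : ∀ n, MemLp (lipSlope (fn n)) 2 m := fun n => (hfn n).memLp_lipSlope hbdd 2
  have hlim : Tendsto (fun n => eLpNorm (fn n - f) 2 m) atTop (𝓝 0) :=
    tendsto_eLpNorm_two_of_tendsto_lintegral_sq hL2
  have hlim_abs : Tendsto (fun n => eLpNorm ((fun x => |fn n x|) - fun x => |f x|) 2 m) atTop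
      (𝓝 0) :=
    tendsto_of_tendsto_of_tendsto_of_le_of_le tendsto_const_nhds hlim (fun _ => zero_le)
      fun n => eLpNorm_mono fun x => abs_abs_sub_abs_le_abs_sub (fn n x) (f x)
  have hslope : Tendsto (fun n => ∫ x, lipSlope (fn n) x * |fn n x| ∂m) atTop
      (𝓝 (∫ x, |f x| * g x ∂m)) := by
    simpa only [mul_comm (g _)] using tendsto_integral_mul_of_weak_of_tendsto_eLpNorm
      (h := fun n x => |fn n x|) (h₀ := fun x => |f x|) hslope2 hweak (fun n => (hfn2 n).abs)
      hf.abs hlim_abs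
  refine memBV_and_totalVar_le_of_tendsto hf.integrable_sq (fun n => (hfn n).lipLoc.sq)
    (tendsto_lintegral_abs_sq_sub_sq (fun n => (hfn2 n).aestronglyMeasurable) hf hlim)
    ENNReal.ofReal_ne_top (ENNReal.tendsto_ofReal (hslope.const_mul 2)) fun n => ?_
  obtain ⟨K, hK⟩ := (hfn n).1
  exact hK.lintegral_lipSlope_sq_le ((hslope2 n).integrable_mul (hfn2 n).abs)

/-- If `f, g ∈ L²(X,m)` and there is a sequence `f_n ∈ Lip_bs(X)` with `f_n → f` in `L²`
and `lip(f_n) → g` weakly in `L²`, then `f² ∈ BV(X,d,m)` and `|D(f²)|(X) ≤ 2 ∫ |f| g dm`. -/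
theorem sq_memBV_of_weak_gradient {X : Type*} [MetricSpace X] [CompleteSpace X]
    [TopologicalSpace.SeparableSpace X] [MeasurableSpace X] [BorelSpace X]
    (m : Measure X)
    (hbdd : ∀ s : Set X, Bornology.IsBounded s → m s < ⊤)
    (f g : X → ℝ) (hf : MemLp f 2 m) (hg : MemLp g 2 m)
    (fn : ℕ → X → ℝ) (hfn : ∀ n, LipBS (fn n))
    (hL2 : Tendsto (fun n => ∫⁻ x, ENNReal.ofReal (|fn n x - f x| ^ 2) ∂m) atTop (𝓝 0))
    (hweak : ∀ φ : X → ℝ, MemLp φ 2 m →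
      Tendsto (fun n => ∫ x, lipSlope (fn n) x * φ x ∂m) atTop
        (𝓝 (∫ x, g x * φ x ∂m))) :
    MemBV m (fun x => (f x) ^ 2) ∧
      totalVar m (fun x => (f x) ^ 2) ≤ ENNReal.ofReal (2 * ∫ x, |f x| * g x ∂m) :=
  sq_memBV_of_weak_gradient_general m hbdd f g hf fn hfn hL2 hweak
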